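/- Let n be a positive integer, let d and δ be divisors of n with gcd(δ, d) = 1. Then the number of nonempty subsets A of {1,2,...,n} satisfying (A) ≡ 1 (mod d) and δ ∣ (A) equals \(\sum_{\substack{j=1\\ \delta j \equiv 1 \ (\mathrm{mod}\ d)}}^{n/\delta} f\left(\left\lfloor \frac{n}{j\delta}\right\rfloor\right)\). -/

import Mathlib

open Finset

/-- `f m` is the number of nonempty subsets `A` of `{1, 2, ..., m}` whose elements are
relatively prime, i.e. the gcd of the elements of `A` is `1`. -/
def f (m : ℕ) : ℕ :=
  ((Finset.Icc 1 m).powerset.filter (fun A => A.Nonempty ∧ A.gcd _root_.id = 1)).card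

lemma gcd_mul_aux (A : Finset ℕ) (k : ℕ) (h : ∀ a ∈ A, k ∣ a) :
    k * A.gcd (fun x => x / k) = A.gcd _root_.id := by
  have : A.gcd _root_.id = A.gcd (fun a => k * (a / k)) :=
    Finset.gcd_congr rfl (fun a ha => (Nat.mul_div_cancel' (h a ha)).symm)
  rw [this, Finset.gcd_mul_left]
  simp

lemma card_gcd_eq (n k : ℕ) (hk : 1 ≤ k) :
    ((Finset.Icc 1 n).powerset.filter
      (fun A => A.Nonempty ∧ A.gcd _root_.id = k)).card = f (n / k) := by
  unfold f
  apply Finset.card_bij' (fun A _ => A.image (· / k)) (fun B _ => B.image (· * k))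
  · -- left inverse
    intro A hA
    simp only [Finset.mem_filter, Finset.mem_powerset] at hA
    obtain ⟨hsub, hne, hgcd⟩ := hA
    have hdvd : ∀ a ∈ A, k ∣ a := fun a ha => hgcd ▸ Finset.gcd_dvd ha
    rw [Finset.image_image]
    have h2 : Finset.image ((fun x => x * k) ∘ fun x => x / k) A = Finset.image _root_.id A :=
      Finset.image_congr (fun a ha => by
        simpa using Nat.div_mul_cancel (hdvd a (by simpa using ha)))
    rw [h2, Finset.image_id]
  · -- right inverse
    intro B hB
    rw [Finset.image_image]
    have h2 : Finset.image ((fun x => x / k) ∘ fun x => x * k) B = Finset.image _root_.id B :=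
      Finset.image_congr (fun b hb => by
        simpa using Nat.mul_div_cancel b (show 0 < k by omega))
    rw [h2, Finset.image_id]

  · -- hi : forward map lands in target
    intro A hA
    simp only [Finset.mem_filter, Finset.mem_powerset] at hA ⊢
    obtain ⟨hsub, hne, hgcd⟩ := hA
    have hdvd : ∀ a ∈ A, k ∣ a := fun a ha => hgcd ▸ Finset.gcd_dvd ha
    refine ⟨?_, hne.image _, ?_⟩
    · intro x hx
      simp only [Finset.mem_image] at hx
      obtain ⟨a, ha, rfl⟩ := hx
      have h1 := hsub ha
      simp only [Finset.mem_Icc] at h1 ⊢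
      constructor
      · exact Nat.one_le_div_iff hk |>.2 (Nat.le_of_dvd h1.1 (hdvd a ha))
      · exact Nat.div_le_div_right h1.2
    · have := gcd_mul_aux A k hdvd
      rw [Finset.gcd_image]
      · have hk0 : 0 < k := hk
        have : k * A.gcd (fun x => x / k) = k * 1 := by rw [this, hgcd, mul_one]
        exact Nat.eq_of_mul_eq_mul_left hk0 this
  · -- hj : backward map lands in source
    intro B hB
    simp only [Finset.mem_filter, Finset.mem_powerset] at hB ⊢
    obtain ⟨hsub, hne, hgcd⟩ := hB
    refine ⟨?_, hne.image _, ?_⟩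
    · intro x hx
      simp only [Finset.mem_image] at hx
      obtain ⟨b, hb, rfl⟩ := hx
      have h1 := hsub hb
      simp only [Finset.mem_Icc] at h1 ⊢
      constructor
      · exact Nat.one_le_iff_ne_zero.2 (Nat.mul_ne_zero (by omega) (by omega))
      · calc b * k ≤ n / k * k := Nat.mul_le_mul_right k h1.2
          _ ≤ n := Nat.div_mul_le_self n k
    · rw [Finset.gcd_image]
      show (B.gcd fun b => b * k) = k
      have : B.gcd (fun b => b * k) = B.gcd (fun b => k * b) :=
        Finset.gcd_congr rfl (fun b _ => mul_comm b k)
      rw [this, Finset.gcd_mul_left]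
      have h3 : B.gcd (fun b => b) = 1 := hgcd
      rw [h3]
      simp
theorem count_subsets_eq (n d δ : ℕ) (hn : 0 < n) (hd : d ∣ n) (hδ : δ ∣ n)
    (hcop : Nat.gcd δ d = 1) :
    ((Finset.Icc 1 n).powerset.filter
        (fun A => A.Nonempty ∧ A.gcd _root_.id % d = 1 % d ∧ δ ∣ A.gcd _root_.id)).card =
      ∑ j ∈ (Finset.Icc 1 (n / δ)).filter (fun j => δ * j % d = 1 % d),
        f (n / (j * δ)) := by
  have hδ0 : 0 < δ := Nat.pos_of_dvd_of_pos hδ hn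
  have key : ((Finset.Icc 1 n).powerset.filter
        (fun A => A.Nonempty ∧ A.gcd _root_.id % d = 1 % d ∧ δ ∣ A.gcd _root_.id)) =
      ((Finset.Icc 1 (n / δ)).filter (fun j => δ * j % d = 1 % d)).biUnion
        (fun j => (Finset.Icc 1 n).powerset.filter
          (fun A => A.Nonempty ∧ A.gcd _root_.id = δ * j)) := by
    ext A
    simp only [Finset.mem_filter, Finset.mem_powerset, Finset.mem_biUnion, Finset.mem_Icc]
    constructor
    · rintro ⟨hsub, hne, hmod, j, hj⟩
      obtain ⟨a, ha⟩ := hne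
      have ha' := hsub ha
      simp only [Finset.mem_Icc] at ha'
      have hgdvd : A.gcd _root_.id ∣ a := Finset.gcd_dvd ha
      have hgpos : 0 < A.gcd _root_.id := Nat.pos_of_dvd_of_pos hgdvd ha'.1
      have hgle : A.gcd _root_.id ≤ n := le_trans (Nat.le_of_dvd ha'.1 hgdvd) ha'.2
      refine ⟨j, ⟨⟨?_, ?_⟩, ?_⟩, hsub, ⟨a, ha⟩, hj⟩
      · by_contra h
        have : j = 0 := by omega
        subst this; simp at hj; omega
      · have : δ * j ≤ n := hj ▸ hgle
        calc j = δ * j / δ := by rw [Nat.mul_div_cancel_left _ hδ0]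
          _ ≤ n / δ := Nat.div_le_div_right this
      · rw [← hj]; exact hmod
    · rintro ⟨j, ⟨_, hjmod⟩, hsub, hne, hgcd⟩
      exact ⟨hsub, hne, by rw [hgcd]; exact hjmod, j, hgcd⟩
  rw [key, Finset.card_biUnion]
  · apply Finset.sum_congr rfl
    intro j hj
    simp only [Finset.mem_filter, Finset.mem_Icc] at hj
    rw [card_gcd_eq n (δ * j) (by nlinarith [hj.1.1])]
    rw [mul_comm j δ]
  · intro x hx y hy hxy
    simp only [Finset.mem_coe, Finset.mem_filter, Finset.mem_Icc] at hx hy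
    apply Finset.disjoint_left.2
    intro A hA hA'
    simp only [Finset.mem_filter] at hA hA'
    have : δ * x = δ * y := hA.2.2.symm.trans hA'.2.2
    exact hxy (Nat.eq_of_mul_eq_mul_left hδ0 this)
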